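/- Let σ be the cyclic permutation (1 3 2) of {1,2,3}, i.e. σ(1) = 3, σ(3) = 2, σ(2) = 1. Then in U(gl_N): w_{gl_N}(σ) = C_3 + C_1² − N·C_2. -/

import Mathlib

open scoped BigOperators

attribute [local instance 100] LieRing.ofAssociativeRing

/-- The Lie algebra `gl_N` of `N × N` complex matrices (with bracket `[x,y] = x*y - y*x`). -/
abbrev gl (N : ℕ) := Matrix (Fin N) (Fin N) ℂ

/-- The canonical embedding of `gl_N` into its universal enveloping algebra. -/
noncomputable def ιgl (N : ℕ) (x : gl N) : UniversalEnvelopingAlgebra ℂ (gl N) :=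
  UniversalEnvelopingAlgebra.ι ℂ x

/-- The matrix unit `E_{ij}`. -/
def E {N : ℕ} (i j : Fin N) : gl N := Matrix.single i j (1 : ℂ)

/-- The value of the `gl_N` invariant on a permutation `σ` of `{1, …, m}`. -/
noncomputable def wgl (N m : ℕ) (σ : Equiv.Perm (Fin m)) :
    UniversalEnvelopingAlgebra ℂ (gl N) :=
  ∑ i : Fin m → Fin N, (List.ofFn fun t : Fin m => ιgl N (E (i t) (i (σ t)))).prod

/-- The `k`-th Casimir element `C_k = Σ E_{i_1 i_2} E_{i_2 i_3} ⋯ E_{i_k i_1}`. -/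
noncomputable def casimir (N k : ℕ) : UniversalEnvelopingAlgebra ℂ (gl N) :=
  wgl N k (finRotate k)

/-! ### Auxiliary lemmas -/

lemma ι_swap {N : ℕ} (x y : gl N) :
    ιgl N x * ιgl N y = ιgl N y * ιgl N x + ιgl N ⁅x, y⁆ := by
  unfold ιgl
  rw [LieHom.map_lie, Ring.lie_def]
  abel

lemma ι_sub {N : ℕ} (x y : gl N) : ιgl N (x - y) = ιgl N x - ιgl N y := by
  have := (UniversalEnvelopingAlgebra.ι ℂ (L := gl N)).toLinearMap.map_sub x y
  simpa [ιgl] using this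

lemma ι_zero {N : ℕ} : ιgl N 0 = 0 := by
  have := (UniversalEnvelopingAlgebra.ι ℂ (L := gl N)).toLinearMap.map_zero
  simpa [ιgl] using this

lemma brkt {N : ℕ} (a b c : Fin N) :
    ⁅E a c, E b a⁆ = (if c = b then E a a else 0) - E b c := by
  by_cases h : c = b
  · subst h
    simp [E, Ring.lie_def, Matrix.single_mul_single_same]
  · simp [E, Ring.lie_def, Matrix.single_mul_single_same, Matrix.single_mul_single_of_ne, h]

lemma sum3 {M : Type*} [AddCommMonoid M] {N : ℕ} (f : (Fin 3 → Fin N) → M) :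
    ∑ i : Fin 3 → Fin N, f i = ∑ a : Fin N, ∑ b : Fin N, ∑ c : Fin N, f ![a, b, c] := by
  rw [Fintype.sum_equiv
    (⟨fun i => (i 0, i 1, i 2), fun p => ![p.1, p.2.1, p.2.2],
      fun i => by funext x; fin_cases x <;> simp, fun p => by simp⟩ :
      (Fin 3 → Fin N) ≃ Fin N × Fin N × Fin N)
    f (fun p => f ![p.1, p.2.1, p.2.2])
    (fun i => by congr 1; funext x; fin_cases x <;> simp)]
  simp [Fintype.sum_prod_type]

lemma sum2 {M : Type*} [AddCommMonoid M] {N : ℕ} (f : (Fin 2 → Fin N) → M) :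
    ∑ i : Fin 2 → Fin N, f i = ∑ a : Fin N, ∑ b : Fin N, f ![a, b] := by
  rw [Fintype.sum_equiv
    (⟨fun i => (i 0, i 1), fun p => ![p.1, p.2],
      fun i => by funext x; fin_cases x <;> simp, fun p => by simp⟩ :
      (Fin 2 → Fin N) ≃ Fin N × Fin N)
    f (fun p => f ![p.1, p.2])
    (fun i => by congr 1; funext x; fin_cases x <;> simp)]
  simp [Fintype.sum_prod_type]

lemma sum1 {M : Type*} [AddCommMonoid M] {N : ℕ} (f : (Fin 1 → Fin N) → M) :
    ∑ i : Fin 1 → Fin N, f i = ∑ a : Fin N, f ![a] := by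
  rw [Fintype.sum_equiv
    (⟨fun i => i 0, fun a => ![a],
      fun i => by funext x; fin_cases x <;> simp, fun a => by simp⟩ :
      (Fin 1 → Fin N) ≃ Fin N)
    f (fun a => f ![a])
    (fun i => by congr 1; funext x; fin_cases x <;> simp)]

lemma wgl3 (N : ℕ) (σ : Equiv.Perm (Fin 3)) : wgl N 3 σ =
    ∑ i : Fin 3 → Fin N,
      ιgl N (E (i 0) (i (σ 0))) * ιgl N (E (i 1) (i (σ 1))) * ιgl N (E (i 2) (i (σ 2))) := by
  unfold wgl
  congr 1; funext i
  simp [List.ofFn_succ, mul_assoc]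

lemma wgl2 (N : ℕ) (σ : Equiv.Perm (Fin 2)) : wgl N 2 σ =
    ∑ i : Fin 2 → Fin N, ιgl N (E (i 0) (i (σ 0))) * ιgl N (E (i 1) (i (σ 1))) := by
  unfold wgl
  congr 1; funext i
  simp [List.ofFn_succ, mul_assoc]

lemma wgl1 (N : ℕ) (σ : Equiv.Perm (Fin 1)) : wgl N 1 σ =
    ∑ i : Fin 1 → Fin N, ιgl N (E (i 0) (i (σ 0))) := by
  unfold wgl
  congr 1; funext i
  simp [List.ofFn_succ]

/-- For the cyclic permutation `σ = (1 3 2)` of `{1,2,3}` (so `σ(1) = 3`, `σ(3) = 2`,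
`σ(2) = 1`; in `Fin 3` terms `σ 0 = 2`, `σ 2 = 1`, `σ 1 = 0`), one has
`w_{gl_N}(σ) = C_3 + C_1² − N·C_2`. -/
theorem wgl_one_three_two (N : ℕ) (hN : 1 ≤ N) (σ : Equiv.Perm (Fin 3))
    (h1 : σ 0 = 2) (h2 : σ 2 = 1) (h3 : σ 1 = 0) :
    wgl N 3 σ =
      casimir N 3 + (casimir N 1) ^ 2 -
        (N : UniversalEnvelopingAlgebra ℂ (gl N)) * casimir N 2 := by
  have hw : wgl N 3 σ =
      ∑ a : Fin N, ∑ b : Fin N, ∑ c : Fin N,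
        ιgl N (E a c) * ιgl N (E b a) * ιgl N (E c b) := by
    rw [wgl3, sum3]
    simp [h1, h2, h3]
  have hc3 : casimir N 3 =
      ∑ a : Fin N, ∑ b : Fin N, ∑ c : Fin N,
        ιgl N (E a b) * ιgl N (E b c) * ιgl N (E c a) := by
    rw [casimir, wgl3, sum3]
    have e0 : finRotate 3 0 = 1 := by decide
    have e1 : finRotate 3 1 = 2 := by decide
    have e2 : finRotate 3 2 = 0 := by decide
    simp [e0, e1, e2]
  have hc2 : casimir N 2 =
      ∑ a : Fin N, ∑ b : Fin N, ιgl N (E a b) * ιgl N (E b a) := by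
    rw [casimir, wgl2, sum2]
    have e0 : finRotate 2 0 = 1 := by decide
    have e1 : finRotate 2 1 = 0 := by decide
    simp [e0, e1]
  have hc1 : casimir N 1 = ∑ a : Fin N, ιgl N (E a a) := by
    rw [casimir, wgl1, sum1]
    simp [show finRotate 1 0 = 0 from by decide]
  rw [hw, hc3, hc2, hc1]
  have step : ∀ a b c : Fin N,
      ιgl N (E a c) * ιgl N (E b a) * ιgl N (E c b)
        = ιgl N (E b a) * ιgl N (E a c) * ιgl N (E c b)
          + ((if c = b then ιgl N (E a a) * ιgl N (E c b) else 0)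
              - ιgl N (E b c) * ιgl N (E c b)) := by
    intro a b c
    rw [ι_swap (E a c) (E b a), brkt, ι_sub, add_mul, sub_mul]
    by_cases h : c = b
    · simp [h]
    · simp [h, ι_zero]
  simp only [step]
  simp only [Finset.sum_add_distrib, Finset.sum_sub_distrib]
  have hS1 : (∑ a : Fin N, ∑ b : Fin N, ∑ c : Fin N,
      ιgl N (E b a) * ιgl N (E a c) * ιgl N (E c b))
      = ∑ a : Fin N, ∑ b : Fin N, ∑ c : Fin N,
          ιgl N (E a b) * ιgl N (E b c) * ιgl N (E c a) := by
    rw [Finset.sum_comm]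
  have hS2 : (∑ a : Fin N, ∑ b : Fin N, ∑ c : Fin N,
      (if c = b then ιgl N (E a a) * ιgl N (E c b) else 0))
      = (∑ a : Fin N, ιgl N (E a a)) ^ 2 := by
    rw [pow_two, Finset.sum_mul_sum]
    refine Finset.sum_congr rfl fun a _ => Finset.sum_congr rfl fun b _ => ?_
    simp [Finset.sum_ite_eq']
  have hS3 : (∑ a : Fin N, ∑ b : Fin N, ∑ c : Fin N,
      ιgl N (E b c) * ιgl N (E c b))
      = (N : UniversalEnvelopingAlgebra ℂ (gl N)) *
          ∑ a : Fin N, ∑ b : Fin N, ιgl N (E a b) * ιgl N (E b a) := by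
    rw [Finset.sum_const, Finset.card_univ, Fintype.card_fin, nsmul_eq_mul]
  rw [hS1, hS2, hS3]
  abel
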